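/- There exist permutations σ₁, σ₂, σ₃ of {1, …, 30} such that σ₁ ∘ σ₂ ∘ σ₃ = id, the subgroup generated by σ₁, σ₂, σ₃ acts transitively on {1, …, 30}, and the multisets of orbit sizes of the cyclic groups generated by σ₁, σ₂, σ₃ are, respectively, {11,4,3,2,2,2,1,1,1,1,1,1}, {9,7,6,3,3,1,1}, and {14,5,4,2,2,2,1}. -/

import Mathlib

/-!
The witness is written in cycle notation. A list `l` with `l.map σ = l.rotate 1` is a cycle of
`σ`, so the orbit sizes of `σ` are the lengths of any family of such lists that partitions the
points; these conditions are finite and are checked by `decide`. For transitivity, a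
breadth-first search from `0` along the three generators reaches every point within six steps,
and everything it reaches lies in the orbit of `0` under the generated subgroup.
-/

/-- The number of orbits of the cyclic group generated by a permutation `σ`
(i.e., the number of cycles of `σ`, counting fixed points as cycles of length 1). -/
noncomputable def cycleCount {α : Type*} [Finite α] (σ : Equiv.Perm α) : ℕ :=
  Nat.card (MulAction.orbitRel.Quotient (Subgroup.zpowers σ) α)

/-- The multiset of sizes of the orbits of the cyclic group generated by a permutation `σ`
(i.e., the cycle type of `σ`, with fixed points contributing parts equal to 1). -/
noncomputable def orbitSizes {α : Type*} [Finite α] (σ : Equiv.Perm α) : Multiset ℕ :=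
  letI := Fintype.ofFinite (MulAction.orbitRel.Quotient (Subgroup.zpowers σ) α)
  (Finset.univ : Finset (MulAction.orbitRel.Quotient (Subgroup.zpowers σ) α)).val.map
    fun q => Nat.card q.orbit

open Equiv MulAction Subgroup

theorem List.eq_of_mem_getElem_of_nodup_flatten {α : Type*} {L : List (List α)}
    (hnd : L.flatten.Nodup) {i j : ℕ} (hi : i < L.length) (hj : j < L.length) {x : α}
    (hxi : x ∈ L[i]) (hxj : x ∈ L[j]) : i = j := by
  have hdisj := List.pairwise_iff_getElem.mp (List.nodup_flatten.mp hnd).2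
  by_contra hij
  rcases Nat.lt_or_gt_of_ne hij with h | h
  · exact hdisj i j hi hj h hxi hxj
  · exact hdisj j i hj hi h hxj hxi

namespace Equiv.Perm

variable {α : Type*} {σ : Perm α}

theorem mem_orbit_zpowers_iff_sameCycle {x y : α} :
    y ∈ orbit (zpowers σ) x ↔ σ.SameCycle x y := by
  simp only [mem_orbit_iff, exists_zpowers]
  rfl

section CycleList

variable {l : List α}

theorem image_setOf_mem_of_map_eq_rotate (hc : l.map σ = l.rotate 1) :
    σ '' {y | y ∈ l} = {y | y ∈ l} := by
  ext y
  simp only [Set.mem_image, Set.mem_ofPred_eq]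
  rw [← List.mem_rotate (n := 1), ← hc, List.mem_map]

theorem apply_getElem_of_map_eq_rotate (hc : l.map σ = l.rotate 1) (i : ℕ)
    (hi : i + 1 < l.length) : σ l[i] = l[i + 1] := by
  have h := List.getElem_of_eq hc (i := i) (by simp; omega)
  rw [List.getElem_map, List.getElem_rotate] at h
  simpa [Nat.mod_eq_of_lt hi] using h

theorem sameCycle_getElem_zero_of_map_eq_rotate (hc : l.map σ = l.rotate 1) (i : ℕ)
    (hi : i < l.length) : σ.SameCycle (l[0]'(by omega)) l[i] := by
  induction i with
  | zero => rfl
  | succ i ih =>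
    rw [← apply_getElem_of_map_eq_rotate hc i hi]
    exact sameCycle_apply_right.mpr (ih (by omega))

theorem orbit_zpowers_eq_of_map_eq_rotate (hc : l.map σ = l.rotate 1) {x : α} (hx : x ∈ l) :
    orbit (zpowers σ) x = {y | y ∈ l} := by
  ext y
  rw [mem_orbit_zpowers_iff_sameCycle]
  constructor
  · rintro ⟨i, rfl⟩
    have hbij := σ.injective.injOn.bijOn_image (s := {y | y ∈ l})
    rw [image_setOf_mem_of_map_eq_rotate hc] at hbij
    exact (hbij.perm_zpow i).mapsTo hx
  · intro hy
    obtain ⟨i, hi, rfl⟩ := List.getElem_of_mem hx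
    obtain ⟨j, hj, rfl⟩ := List.getElem_of_mem hy
    exact (sameCycle_getElem_zero_of_map_eq_rotate hc i hi).symm.trans
      (sameCycle_getElem_zero_of_map_eq_rotate hc j hj)

theorem natCard_orbit_zpowers_of_map_eq_rotate (hc : l.map σ = l.rotate 1) (hnd : l.Nodup)
    {x : α} (hx : x ∈ l) : Nat.card (orbit (zpowers σ) x) = l.length := by
  classical
  rw [orbit_zpowers_eq_of_map_eq_rotate hc hx, ← List.toFinset_card_of_nodup hnd,
    ← Nat.card_eq_finsetCard]
  simp

end CycleList

theorem orbitSizes_eq_of_cycles [Finite α] (L : List (List α)) (hne : ∀ l ∈ L, l ≠ [])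
    (hcyc : ∀ l ∈ L, l.map σ = l.rotate 1) (hnd : L.flatten.Nodup)
    (hcov : ∀ x, ∃ l ∈ L, x ∈ l) :
    orbitSizes σ = L.map List.length := by
  have hmem (i : Fin L.length) : L[i] ∈ L := List.getElem_mem _
  have hpos (i : Fin L.length) : 0 < L[i].length := List.length_pos_iff.mpr (hne _ (hmem i))
  have horbit (i : Fin L.length) {x : α} (hx : x ∈ L[i]) :
      orbit (zpowers σ) x = {y | y ∈ L[i]} :=
    orbit_zpowers_eq_of_map_eq_rotate (hcyc _ (hmem i)) hx
  let f : Fin L.length → orbitRel.Quotient (zpowers σ) α := fun i => ⟦L[i][0]'(hpos i)⟧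
  have hf : f.Bijective := by
    refine ⟨fun i j hij => ?_, fun q => ?_⟩
    · have hi := orbitRel_apply.mp (Quotient.exact hij)
      rw [horbit j (List.getElem_mem _)] at hi
      exact Fin.ext (List.eq_of_mem_getElem_of_nodup_flatten hnd _ _ (List.getElem_mem _) hi)
    · induction q using Quotient.inductionOn' with
      | h x =>
        obtain ⟨l, hl, hx⟩ := hcov x
        obtain ⟨i, hi, rfl⟩ := List.getElem_of_mem hl
        refine ⟨⟨i, hi⟩, Quotient.sound' (orbitRel_apply.mpr ?_)⟩
        rw [horbit ⟨i, hi⟩ hx]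
        exact List.getElem_mem _
  let := Fintype.ofFinite (orbitRel.Quotient (zpowers σ) α)
  have hcard (i : Fin L.length) : Nat.card (f i).orbit = L[i].length := by
    rw [orbitRel.Quotient.orbit_mk]
    exact natCard_orbit_zpowers_of_map_eq_rotate (hcyc _ (hmem i))
      ((List.nodup_flatten.mp hnd).1 _ (hmem i)) (List.getElem_mem _)
  rw [orbitSizes, ← (Multiset.bijective_iff_map_univ_eq_univ f).mp hf, Multiset.map_map]
  simp only [Function.comp_def, hcard, Fin.univ_val_map]
  exact congrArg _ (List.ofFn_getElem_eq_map L _)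

end Equiv.Perm

section Reachability

variable {α : Type*} [DecidableEq α]

def Finset.expandBy (S : Finset (Perm α)) (s : Finset α) : Finset α :=
  s ∪ S.biUnion fun g => s.image g

theorem Finset.coe_expandBy_iterate_subset_orbit (S : Finset (Perm α)) (a : α) (n : ℕ) :
    ↑((expandBy S)^[n] {a}) ⊆ orbit (closure (S : Set (Perm α))) a := by
  induction n with
  | zero => simp
  | succ n ih =>
    intro y hy
    simp only [Function.iterate_succ_apply', expandBy, coe_union, coe_biUnion, coe_image,
      Set.mem_union, Set.mem_iUnion, Set.mem_image, mem_coe] at hy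
    rcases hy with hy | ⟨g, hg, x, hx, rfl⟩
    · exact ih hy
    · obtain ⟨h, rfl⟩ := ih hx
      exact ⟨⟨g, subset_closure hg⟩ * h, mul_smul _ _ _⟩

theorem exists_mem_closure_apply_eq_of_expandBy_iterate_eq_univ [Fintype α]
    {S : Finset (Perm α)} {a : α} {n : ℕ} (h : (Finset.expandBy S)^[n] {a} = Finset.univ)
    (x y : α) : ∃ g ∈ closure (S : Set (Perm α)), g x = y := by
  have : IsPretransitive (closure (S : Set (Perm α))) α := by
    rw [isPretransitive_iff_orbit_eq_univ a, Set.eq_univ_iff_forall]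
    intro z
    exact Finset.coe_expandBy_iterate_subset_orbit S a n (by simp [h])
  obtain ⟨g, rfl⟩ := exists_smul_eq (closure (S : Set (Perm α))) x y
  exact ⟨g, g.2, rfl⟩

end Reachability

def Equiv.Perm.ofCycles {α : Type*} [DecidableEq α] (L : List (List α)) : Perm α :=
  (L.map List.formPerm).prod

def cycles₁ : List (List (Fin 30)) :=
  [[0, 4, 17, 5, 21, 3, 9, 2, 27, 25, 18], [15, 16, 23, 24], [11, 14, 29], [6, 20], [8, 26],
   [13, 22], [1], [7], [10], [12], [19], [28]]

def cycles₂ : List (List (Fin 30)) :=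
  [[9, 12, 18, 15, 25, 24, 20, 28, 17], [5, 16, 7, 27, 10, 6, 23], [0, 1, 3, 22, 19, 13],
   [2, 4, 14], [8, 11, 26], [21], [29]]

def cycles₃ : List (List (Fin 30)) :=
  [[3, 21, 23, 5, 28, 20, 10, 27, 14, 8, 11, 29, 4, 13], [7, 16, 18, 15, 25], [0, 12, 9, 1],
   [2, 17], [6, 24], [19, 22], [26]]

set_option maxRecDepth 8000 in
/-- Realizability of the degree-30 branch-data triple
`[11, 4, 3, 2, 2, 2, 1, 1, 1, 1, 1, 1]`, `[9, 7, 6, 3, 3, 1, 1]`, `[14, 5, 4, 2, 2, 2, 1]`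
by a transitive permutation triple with product the identity. -/
theorem realizable_triple_17 :
    ∃ σ₁ σ₂ σ₃ : Equiv.Perm (Fin 30),
      σ₁ * σ₂ * σ₃ = 1 ∧
      (∀ x y : Fin 30,
        ∃ g ∈ Subgroup.closure ({σ₁, σ₂, σ₃} : Set (Equiv.Perm (Fin 30))), g x = y) ∧
      orbitSizes σ₁ = ({11, 4, 3, 2, 2, 2, 1, 1, 1, 1, 1, 1} : Multiset ℕ) ∧
      orbitSizes σ₂ = ({9, 7, 6, 3, 3, 1, 1} : Multiset ℕ) ∧
      orbitSizes σ₃ = ({14, 5, 4, 2, 2, 2, 1} : Multiset ℕ) := by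
  refine ⟨Perm.ofCycles cycles₁, Perm.ofCycles cycles₂, Perm.ofCycles cycles₃, by decide,
    ?_, ?_, ?_, ?_⟩
  · simpa using exists_mem_closure_apply_eq_of_expandBy_iterate_eq_univ
      (S := {Perm.ofCycles cycles₁, Perm.ofCycles cycles₂, Perm.ofCycles cycles₃})
      (a := 0) (n := 6) (by decide)
  · rw [Perm.orbitSizes_eq_of_cycles cycles₁ (by decide) (by decide) (by decide) (by decide)]
    rfl
  · rw [Perm.orbitSizes_eq_of_cycles cycles₂ (by decide) (by decide) (by decide) (by decide)]
    rfl
  · rw [Perm.orbitSizes_eq_of_cycles cycles₃ (by decide) (by decide) (by decide) (by decide)]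
    rfl
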